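/- Let {X α}_{α ∈ ι} be a finite family of operators on a finite-dimensional complex Hilbert space W of dimension n such that Σ_α X(α) ⊗ X(α)† acts as the identity on operator space, in the sense that Σ_α tr(X(α)† A) X(α) = A for all A. Then for every operator A, Σ_α X(α)† A X(α) = tr(A) · 1. -/

import Mathlib

open scoped InnerProductSpace

lemma trace_eq_sum_inner' {W : Type*} [NormedAddCommGroup W] [InnerProductSpace ℂ W]
    [FiniteDimensional ℂ W] {n : Type*} [Fintype n] [DecidableEq n]
    (b : OrthonormalBasis n ℂ W) (f : W →ₗ[ℂ] W) :
    LinearMap.trace ℂ W f = ∑ i, ⟪b i, f (b i)⟫_ℂ := by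
  rw [LinearMap.trace_eq_matrix_trace ℂ b.toBasis, Matrix.trace]
  simp [Matrix.diag, LinearMap.toMatrix_apply, OrthonormalBasis.coe_toBasis,
    b.repr_apply_apply]

lemma trace_adjoint_comp_rankOne {W : Type*} [NormedAddCommGroup W] [InnerProductSpace ℂ W]
    [FiniteDimensional ℂ W] (f : W →ₗ[ℂ] W) (x y : W) :
    LinearMap.trace ℂ W (LinearMap.adjoint f * (innerₛₗ ℂ y).smulRight x) = ⟪f y, x⟫_ℂ := by
  set b := stdOrthonormalBasis ℂ W
  rw [trace_eq_sum_inner' b]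
  simp only [Module.End.mul_apply, LinearMap.smulRight_apply, innerₛₗ_apply_apply, map_smul,
    inner_smul_right]
  rw [b.sum_inner_mul_inner y (LinearMap.adjoint f x), LinearMap.adjoint_inner_right]

theorem stmt12 {W : Type*} [NormedAddCommGroup W] [InnerProductSpace ℂ W]
    [FiniteDimensional ℂ W] {ι : Type*} [Fintype ι] (X : ι → (W →ₗ[ℂ] W))
    (hX : ∀ A : W →ₗ[ℂ] W,
      ∑ α, (LinearMap.trace ℂ W (LinearMap.adjoint (X α) * A)) • X α = A) :
    ∀ A : W →ₗ[ℂ] W,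
      ∑ α, LinearMap.adjoint (X α) * A * X α
        = (LinearMap.trace ℂ W A) • (1 : W →ₗ[ℂ] W) := by
  intro A
  set b := stdOrthonormalBasis ℂ W with hb
  -- key scalar identity
  have key : ∀ (x y z u : W),
      ∑ α, ⟪X α y, x⟫_ℂ * ⟪z, X α u⟫_ℂ = ⟪y, u⟫_ℂ * ⟪z, x⟫_ℂ := by
    intro x y z u
    have h := hX ((innerₛₗ ℂ y).smulRight x)
    have h2 := congrArg (fun f : W →ₗ[ℂ] W => ⟪z, f u⟫_ℂ) h
    simp only [LinearMap.sum_apply, LinearMap.smul_apply, inner_sum, inner_smul_right,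
      trace_adjoint_comp_rankOne, LinearMap.smulRight_apply, innerₛₗ_apply_apply] at h2
    rw [h2]
  apply LinearMap.ext
  intro w
  apply ext_inner_left ℂ
  intro v
  simp only [LinearMap.sum_apply, Module.End.mul_apply, inner_sum, LinearMap.smul_apply,
    Module.End.one_apply, inner_smul_right]
  have expand : ∀ α : ι, ⟪v, (LinearMap.adjoint (X α)) (A (X α w))⟫_ℂ
      = ∑ i, ∑ j, ⟪b i, A (b j)⟫_ℂ * (⟪X α v, b i⟫_ℂ * ⟪b j, X α w⟫_ℂ) := by
    intro α
    rw [LinearMap.adjoint_inner_right, ← b.sum_inner_mul_inner (X α v) (A (X α w))]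
    congr 1
    funext i
    conv_lhs => rw [← b.sum_repr' (X α w)]
    simp only [map_sum, map_smul, inner_sum, inner_smul_right, Finset.mul_sum]
    congr 1
    funext j
    ring
  rw [Finset.sum_congr rfl fun α _ => expand α, Finset.sum_comm]
  have : ∀ i, ∑ α, ∑ j, ⟪b i, A (b j)⟫_ℂ * (⟪X α v, b i⟫_ℂ * ⟪b j, X α w⟫_ℂ)
      = ⟪b i, A (b i)⟫_ℂ * ⟪v, w⟫_ℂ := by
    intro i
    rw [Finset.sum_comm]
    have : ∀ j, ∑ α, ⟪b i, A (b j)⟫_ℂ * (⟪X α v, b i⟫_ℂ * ⟪b j, X α w⟫_ℂ)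
        = ⟪b i, A (b j)⟫_ℂ * (⟪v, w⟫_ℂ * ⟪b j, b i⟫_ℂ) := by
      intro j
      rw [← Finset.mul_sum, key (b i) v (b j) w]
    rw [Finset.sum_congr rfl fun j _ => this j]
    rw [Finset.sum_eq_single i]
    · simp [real_inner_self_eq_norm_sq]
    · intro j _ hj
      rw [orthonormal_iff_ite.mp b.orthonormal]; simp [hj]
    · simp
  rw [Finset.sum_congr rfl fun i _ => this i, ← Finset.sum_mul,
    ← trace_eq_sum_inner' b A]
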